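/- arXiv:1308.4884 — 2 statements merged into one kernel-verified Lean document; each statement's English description precedes it below -/
import Mathlib

section
/- Let T > 0, let y₀¹, y₀² ∈ (0, F₁(1)), let w¹, w² : [0,T] → ℝ with w¹₀ = w²₀ = 0, and for i = 1,2 let yⁱ : [0,T] → (0, F₁(1)) be a continuous solution of yⁱ_t = y₀ⁱ + ∫₀^t (G ∘ F₁⁻¹)(yⁱ_s) ds + γθ^β wⁱ_t. Then sup_{t∈[0,T]} |y¹_t - y²_t| ≤ |y₀¹ - y₀²| + 2γθ^β sup_{t∈[0,T]} |w¹_t - w²_t|. -/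
noncomputable def F1 (β y : ℝ) : ℝ := ∫ v in (0:ℝ)..y, (v * (1 - v)) ^ (-β)

noncomputable def F1inv (β z : ℝ) : ℝ := Function.invFunOn (F1 β) (Set.Icc 0 1) z

noncomputable def G (β θ μ x : ℝ) : ℝ := θ * (μ - x) * (x * (1 - x)) ^ (-β)

/-!
The drift `G ∘ F₁⁻¹` is nonincreasing on `(0, F₁(1))`: `F₁⁻¹` is increasing, and `G` is
nonincreasing on `(0,1)` since `G'(x) = θ (x(1-x))^{-β-1} (β (x-μ)(1-2x) - x(1-x)) ≤ 0` for
`0 ≤ β ≤ 1`. So on a time interval where `y¹ > y²` the drift can only decrease `y¹ - y²`, which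
then moves by at most the noise increment `2γθ^β sup |w¹ - w²|`. Starting from the last time
before `t` at which `y¹ - y² ≤ |y₀¹ - y₀²|` gives the bound.
-/

open Set MeasureTheory intervalIntegral

theorem intervalIntegrable_rpow_neg_mul_one_sub {β : ℝ} (hβ : β < 1) :
    IntervalIntegrable (fun v : ℝ => (v * (1 - v)) ^ (-β)) volume 0 1 := by
  have hleft : IntervalIntegrable (fun v : ℝ => v ^ (-β) * (1 - v) ^ (-β)) volume 0 (1 / 2) := by
    refine (intervalIntegrable_rpow' (by linarith)).mul_continuousOn ?_
    refine ContinuousOn.rpow_const (by fun_prop) fun v hv => Or.inl ?_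
    rw [uIcc_of_le (by norm_num)] at hv
    linarith [hv.2]
  have hright : IntervalIntegrable (fun v : ℝ => v ^ (-β) * (1 - v) ^ (-β)) volume (1 / 2) 1 := by
    have h : IntervalIntegrable (fun v : ℝ => (1 - v) ^ (-β)) volume (1 / 2) 1 := by
      have h₀ := intervalIntegrable_rpow' (r := -β) (a := 0) (b := 1 / 2) (by linarith)
      simpa only [sub_zero, show (1:ℝ) - 1 / 2 = 1 / 2 by norm_num] using
        (h₀.comp_sub_left 1).symm
    refine h.continuousOn_mul (ContinuousOn.rpow_const (by fun_prop) fun v hv => Or.inl ?_)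
    rw [uIcc_of_le (by norm_num)] at hv
    linarith [hv.1]
  refine (hleft.trans hright).congr ?_
  rw [uIoc_of_le zero_le_one]
  exact fun v hv => (Real.mul_rpow hv.1.le (sub_nonneg.2 hv.2)).symm

theorem F1_zero (β : ℝ) : F1 β 0 = 0 := integral_same

theorem F1_continuousOn {β : ℝ} (hβ : β < 1) : ContinuousOn (F1 β) (Icc 0 1) := by
  have h := continuousOn_primitive_interval' (intervalIntegrable_rpow_neg_mul_one_sub hβ)
    left_mem_uIcc
  rw [uIcc_of_le zero_le_one] at h
  exact h

theorem F1_strictMonoOn {β : ℝ} (hβ : β < 1) : StrictMonoOn (F1 β) (Icc 0 1) := by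
  intro x hx y hy hxy
  have hint : ∀ {a b : ℝ}, a ∈ Icc (0:ℝ) 1 → b ∈ Icc (0:ℝ) 1 →
      IntervalIntegrable (fun v : ℝ => (v * (1 - v)) ^ (-β)) volume a b := fun ha hb =>
    (intervalIntegrable_rpow_neg_mul_one_sub hβ).mono_set (by
      rw [uIcc_of_le zero_le_one]; exact uIcc_subset_Icc ha hb)
  have hpos : 0 < ∫ v in x..y, (v * (1 - v)) ^ (-β) :=
    intervalIntegral_pos_of_pos_on (hint hx hy) (fun v hv => Real.rpow_pos_of_pos
      (mul_pos (hx.1.trans_lt hv.1) (sub_pos.2 (hv.2.trans_le hy.2))) _) hxy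
  have := integral_add_adjacent_intervals (hint (left_mem_Icc.2 zero_le_one) hx) (hint hx hy)
  unfold F1
  linarith

theorem F1_surjOn {β : ℝ} (hβ : β < 1) : SurjOn (F1 β) (Icc 0 1) (Icc (F1 β 0) (F1 β 1)) :=
  intermediate_value_Icc zero_le_one (F1_continuousOn hβ)

section InverseOfStrictMono

variable {f : ℝ → ℝ} {s t : Set ℝ}

theorem StrictMonoOn.strictMonoOn_invFunOn (hf : StrictMonoOn f s) (hst : SurjOn f s t) :
    StrictMonoOn (Function.invFunOn f s) t := by
  intro x hx y hy hxy
  by_contra! h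
  have := hf.monotoneOn (hst.mapsTo_invFunOn hy) (hst.mapsTo_invFunOn hx) h
  rw [hst.rightInvOn_invFunOn hx, hst.rightInvOn_invFunOn hy] at this
  exact hxy.not_ge this

variable {a b : ℝ}

theorem Set.SurjOn.mapsTo_invFunOn_Ioo (hst : SurjOn f (Icc a b) (Icc (f a) (f b))) :
    MapsTo (Function.invFunOn f (Icc a b)) (Ioo (f a) (f b)) (Ioo a b) := by
  intro z hz
  have hmem := hst.mapsTo_invFunOn (Ioo_subset_Icc_self hz)
  have hinv := hst.rightInvOn_invFunOn (Ioo_subset_Icc_self hz)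
  refine ⟨hmem.1.lt_of_ne ?_, hmem.2.lt_of_ne ?_⟩ <;> intro h
  · rw [← h] at hinv
    exact hz.1.ne hinv
  · rw [h] at hinv
    exact hz.2.ne hinv.symm

theorem StrictMonoOn.continuousOn_invFunOn_Ioo (hf : StrictMonoOn f (Icc a b))
    (hst : SurjOn f (Icc a b) (Icc (f a) (f b))) :
    ContinuousOn (Function.invFunOn f (Icc a b)) (Ioo (f a) (f b)) := by
  intro z hz
  refine (continuousAt_of_monotoneOn_of_image_mem_nhds
    ((hf.strictMonoOn_invFunOn hst).monotoneOn.mono Ioo_subset_Icc_self)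
    (isOpen_Ioo.mem_nhds hz) ?_).continuousWithinAt
  refine Filter.mem_of_superset (isOpen_Ioo.mem_nhds (hst.mapsTo_invFunOn_Ioo hz)) fun x hx => ?_
  have hxI : x ∈ Icc a b := Ioo_subset_Icc_self hx
  have hab : a ≤ b := hx.1.le.trans hx.2.le
  exact ⟨f x, ⟨hf (left_mem_Icc.2 hab) hxI hx.1, hf hxI (right_mem_Icc.2 hab) hx.2⟩,
    hf.injOn.leftInvOn_invFunOn hxI⟩

end InverseOfStrictMono

theorem hasDerivAt_G (β θ μ : ℝ) {x : ℝ} (hx : x ∈ Ioo (0:ℝ) 1) :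
    HasDerivAt (G β θ μ)
      (θ * (x * (1 - x)) ^ (-β - 1) * (β * ((x - μ) * (1 - 2 * x)) - x * (1 - x))) x := by
  have hP : x * (1 - x) ≠ 0 := (mul_pos hx.1 (sub_pos.2 hx.2)).ne'
  have hpoly : HasDerivAt (fun y : ℝ => y * (1 - y)) (1 - 2 * x) x :=
    ((hasDerivAt_id x).mul ((hasDerivAt_id x).const_sub 1)).congr_deriv (by simp only [id_eq]; ring)
  have hlin : HasDerivAt (fun y : ℝ => θ * (μ - y)) (-θ) x := by
    simpa using ((hasDerivAt_id x).const_sub μ).const_mul θ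
  have hpow := (Real.hasDerivAt_rpow_const (p := -β) (Or.inl hP)).comp x hpoly
  refine (hlin.mul hpow).congr_deriv ?_
  rw [Function.comp_apply, Real.rpow_sub_one hP]
  linear_combination θ * (x * (1 - x)) ^ (-β) * mul_inv_cancel₀ hP

theorem G_antitoneOn {β θ μ : ℝ} (hβ : β ∈ Icc (0:ℝ) 1) (hθ : 0 ≤ θ) (hμ : μ ∈ Icc (0:ℝ) 1) :
    AntitoneOn (G β θ μ) (Ioo 0 1) := by
  refine antitoneOn_of_hasDerivWithinAt_nonpos (convex_Ioo 0 1)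
    (fun x hx => (hasDerivAt_G β θ μ hx).continuousAt.continuousWithinAt)
    (fun x hx => (hasDerivAt_G β θ μ (interior_subset hx)).hasDerivWithinAt) fun x hx => ?_
  rw [interior_Ioo] at hx
  obtain ⟨hx0, hx1⟩ := hx
  have hkey : β * ((x - μ) * (1 - 2 * x)) ≤ x * (1 - x) := by
    rcases le_total ((x - μ) * (1 - 2 * x)) 0 with h | h
    · nlinarith [hβ.1]
    · have : (x - μ) * (1 - 2 * x) ≤ x * (1 - x) := by
        rcases le_total x (1 / 2) with hx2 | hx2 <;> nlinarith [hμ.1, hμ.2]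
      nlinarith [hβ.2]
  exact mul_nonpos_of_nonneg_of_nonpos (by positivity) (by linarith)

theorem G_continuousOn (β θ μ : ℝ) : ContinuousOn (G β θ μ) (Ioo 0 1) :=
  fun _ hx => (hasDerivAt_G β θ μ hx).continuousAt.continuousWithinAt

theorem antitoneOn_G_comp_F1inv {β θ μ : ℝ} (hβ : β ∈ Ico (0:ℝ) 1) (hθ : 0 ≤ θ)
    (hμ : μ ∈ Icc (0:ℝ) 1) : AntitoneOn (fun z => G β θ μ (F1inv β z)) (Ioo 0 (F1 β 1)) := by
  rw [← F1_zero β]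
  intro z hz z' hz' hzz'
  exact G_antitoneOn (Ico_subset_Icc_self hβ) hθ hμ ((F1_surjOn hβ.2).mapsTo_invFunOn_Ioo hz)
    ((F1_surjOn hβ.2).mapsTo_invFunOn_Ioo hz')
    (((F1_strictMonoOn hβ.2).strictMonoOn_invFunOn (F1_surjOn hβ.2)).monotoneOn
      (Ioo_subset_Icc_self hz) (Ioo_subset_Icc_self hz') hzz')

theorem continuousOn_G_comp_F1inv {β θ μ : ℝ} (hβ : β < 1) :
    ContinuousOn (fun z => G β θ μ (F1inv β z)) (Ioo 0 (F1 β 1)) := by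
  rw [← F1_zero β]
  exact (G_continuousOn β θ μ).comp
    ((F1_strictMonoOn hβ).continuousOn_invFunOn_Ioo (F1_surjOn hβ))
    (F1_surjOn hβ).mapsTo_invFunOn_Ioo

theorem le_add_of_increase_le_while_pos {D : ℝ → ℝ} {T c K : ℝ}
    (hD : ContinuousOn D (Icc 0 T)) (hc : 0 ≤ c) (hD₀ : D 0 ≤ c)
    (hinc : ∀ s ∈ Icc 0 T, ∀ t ∈ Icc s T, (∀ u ∈ Ioc s t, 0 < D u) → D t ≤ D s + K) :
    ∀ t ∈ Icc 0 T, D t ≤ c + K := by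
  intro t ht
  have hclosed : IsClosed (Icc 0 t ∩ D ⁻¹' Iic c) :=
    (hD.mono (Icc_subset_Icc le_rfl ht.2)).preimage_isClosed_of_isClosed isClosed_Icc
      isClosed_Iic
  obtain ⟨s, ⟨hs, hDs : D s ≤ c⟩, hlast⟩ :=
    (isCompact_Icc.of_isClosed_subset hclosed inter_subset_left).exists_isGreatest
      ⟨0, left_mem_Icc.2 ht.1, hD₀⟩
  have hpos : ∀ u ∈ Ioc s t, 0 < D u := fun u hu =>
    hc.trans_lt (not_le.1 fun h => hu.1.not_ge (hlast ⟨⟨hs.1.trans hu.1.le, hu.2⟩, h⟩))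
  linarith [hinc s ⟨hs.1, hs.2.trans ht.2⟩ t ⟨hs.2, ht.2⟩ hpos]

section AntitoneDrift

variable {b : ℝ → ℝ} {S : Set ℝ} {T σ M x₁ x₂ : ℝ} {w₁ w₂ y₁ y₂ : ℝ → ℝ}

theorem sub_le_of_antitoneOn_drift (hb : AntitoneOn b S) (hσ : 0 ≤ σ) (hw₀ : w₁ 0 = w₂ 0)
    (hw : ∀ t ∈ Icc 0 T, |w₁ t - w₂ t| ≤ M)
    (hy₁c : ContinuousOn y₁ (Icc 0 T)) (hy₂c : ContinuousOn y₂ (Icc 0 T))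
    (hy₁S : MapsTo y₁ (Icc 0 T) S) (hy₂S : MapsTo y₂ (Icc 0 T) S)
    (hb₁ : IntegrableOn (fun s => b (y₁ s)) (Icc 0 T))
    (hb₂ : IntegrableOn (fun s => b (y₂ s)) (Icc 0 T))
    (hy₁ : ∀ t ∈ Icc 0 T, y₁ t = x₁ + (∫ s in (0:ℝ)..t, b (y₁ s)) + σ * w₁ t)
    (hy₂ : ∀ t ∈ Icc 0 T, y₂ t = x₂ + (∫ s in (0:ℝ)..t, b (y₂ s)) + σ * w₂ t) :
    ∀ t ∈ Icc 0 T, y₁ t - y₂ t ≤ |x₁ - x₂| + 2 * σ * M := by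
  intro t ht
  have h₀ : (0:ℝ) ∈ Icc 0 T := left_mem_Icc.2 (ht.1.trans ht.2)
  have hii : ∀ {f : ℝ → ℝ}, IntegrableOn f (Icc 0 T) →
      ∀ u ∈ Icc 0 T, ∀ v ∈ Icc 0 T, IntervalIntegrable f volume u v := fun hf u hu v hv =>
    (hf.mono_set (uIcc_subset_Icc hu hv)).intervalIntegrable
  refine le_add_of_increase_le_while_pos (D := fun t => y₁ t - y₂ t) (hy₁c.sub hy₂c)
    (abs_nonneg _) ?_ ?_ t ht
  · show y₁ 0 - y₂ 0 ≤ |x₁ - x₂|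
    rw [hy₁ 0 h₀, hy₂ 0 h₀, integral_same, integral_same, hw₀]
    simpa using le_abs_self (x₁ - x₂)
  intro s hs t ht hpos
  have htT : t ∈ Icc 0 T := ⟨hs.1.trans ht.1, ht.2⟩
  have hdrift : (∫ u in s..t, b (y₁ u)) ≤ ∫ u in s..t, b (y₂ u) := by
    refine integral_mono_on_of_le_Ioo ht.1 (hii hb₁ s hs t htT) (hii hb₂ s hs t htT) fun u hu => ?_
    have huT : u ∈ Icc 0 T := ⟨hs.1.trans hu.1.le, hu.2.le.trans ht.2⟩
    exact hb (hy₂S huT) (hy₁S huT) (sub_pos.1 (hpos u (Ioo_subset_Ioc_self hu))).le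
  have hnoise : σ * (w₁ t - w₂ t) - σ * (w₁ s - w₂ s) ≤ 2 * σ * M := by
    have := abs_le.1 (hw t htT)
    have := abs_le.1 (hw s hs)
    nlinarith
  have h₁ := integral_interval_sub_left (hii hb₁ 0 h₀ t htT) (hii hb₁ 0 h₀ s hs)
  have h₂ := integral_interval_sub_left (hii hb₂ 0 h₀ t htT) (hii hb₂ 0 h₀ s hs)
  show y₁ t - y₂ t ≤ y₁ s - y₂ s + 2 * σ * M
  rw [hy₁ t htT, hy₂ t htT, hy₁ s hs, hy₂ s hs]
  linarith

theorem abs_sub_le_of_antitoneOn_drift (hb : AntitoneOn b S) (hσ : 0 ≤ σ) (hw₀ : w₁ 0 = w₂ 0)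
    (hw : ∀ t ∈ Icc 0 T, |w₁ t - w₂ t| ≤ M)
    (hy₁c : ContinuousOn y₁ (Icc 0 T)) (hy₂c : ContinuousOn y₂ (Icc 0 T))
    (hy₁S : MapsTo y₁ (Icc 0 T) S) (hy₂S : MapsTo y₂ (Icc 0 T) S)
    (hb₁ : IntegrableOn (fun s => b (y₁ s)) (Icc 0 T))
    (hb₂ : IntegrableOn (fun s => b (y₂ s)) (Icc 0 T))
    (hy₁ : ∀ t ∈ Icc 0 T, y₁ t = x₁ + (∫ s in (0:ℝ)..t, b (y₁ s)) + σ * w₁ t)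
    (hy₂ : ∀ t ∈ Icc 0 T, y₂ t = x₂ + (∫ s in (0:ℝ)..t, b (y₂ s)) + σ * w₂ t) :
    ∀ t ∈ Icc 0 T, |y₁ t - y₂ t| ≤ |x₁ - x₂| + 2 * σ * M := fun t ht =>
  abs_sub_le_iff.2
    ⟨sub_le_of_antitoneOn_drift hb hσ hw₀ hw hy₁c hy₂c hy₁S hy₂S hb₁ hb₂ hy₁ hy₂ t ht, by
      rw [abs_sub_comm x₁]
      refine sub_le_of_antitoneOn_drift hb hσ hw₀.symm (fun t ht => ?_) hy₂c hy₁c hy₂S hy₁S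
        hb₂ hb₁ hy₂ hy₁ t ht
      rw [abs_sub_comm]
      exact hw t ht⟩

end AntitoneDrift

theorem stmt10_general (α β θ μ γ T : ℝ) (hα : α ∈ Set.Ioc (0:ℝ) 1)
    (hβ : β ∈ Set.Ioo (1 - α) 1) (hθ : 0 < θ) (hμ : μ ∈ Set.Ioo (0:ℝ) 1)
    (hγ : 0 ≤ γ)
    (y₀1 y₀2 : ℝ)
    (w1 w2 : ℝ → ℝ)
    (hw1c : ContinuousOn w1 (Set.Icc 0 T)) (hw10 : w1 0 = 0)
    (hw2c : ContinuousOn w2 (Set.Icc 0 T)) (hw20 : w2 0 = 0)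
    (y1 y2 : ℝ → ℝ)
    (hy1c : ContinuousOn y1 (Set.Icc 0 T))
    (hy1m : ∀ t ∈ Set.Icc (0:ℝ) T, y1 t ∈ Set.Ioo 0 (F1 β 1))
    (hy1e : ∀ t ∈ Set.Icc (0:ℝ) T,
      y1 t = y₀1 + (∫ s in (0:ℝ)..t, G β θ μ (F1inv β (y1 s))) + γ * θ ^ β * w1 t)
    (hy2c : ContinuousOn y2 (Set.Icc 0 T))
    (hy2m : ∀ t ∈ Set.Icc (0:ℝ) T, y2 t ∈ Set.Ioo 0 (F1 β 1))
    (hy2e : ∀ t ∈ Set.Icc (0:ℝ) T,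
      y2 t = y₀2 + (∫ s in (0:ℝ)..t, G β θ μ (F1inv β (y2 s))) + γ * θ ^ β * w2 t) :
    ∀ t ∈ Set.Icc (0:ℝ) T,
      |y1 t - y2 t| ≤ |y₀1 - y₀2| +
        2 * γ * θ ^ β * sSup ((fun s => |w1 s - w2 s|) '' Set.Icc 0 T) := by
  have hβ' : β ∈ Ico (0:ℝ) 1 := ⟨by linarith [hα.2, hβ.1], hβ.2⟩
  have hdrift := continuousOn_G_comp_F1inv (θ := θ) (μ := μ) hβ.2
  have hbdd : BddAbove ((fun s => |w1 s - w2 s|) '' Icc 0 T) :=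
    (isCompact_Icc.image_of_continuousOn (hw1c.sub hw2c).abs).bddAbove
  simpa only [mul_assoc] using abs_sub_le_of_antitoneOn_drift
    (antitoneOn_G_comp_F1inv hβ' hθ.le (Ioo_subset_Icc_self hμ))
    (mul_nonneg hγ (Real.rpow_nonneg hθ.le β)) (hw10.trans hw20.symm)
    (fun t ht => le_csSup hbdd (mem_image_of_mem _ ht)) hy1c hy2c hy1m hy2m
    (hdrift.comp hy1c hy1m).integrableOn_Icc (hdrift.comp hy2c hy2m).integrableOn_Icc hy1e hy2e

theorem stmt10 (α β θ μ γ T : ℝ) (hα : α ∈ Set.Ioc (0:ℝ) 1)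
    (hβ : β ∈ Set.Ioo (1 - α) 1) (hθ : 0 < θ) (hμ : μ ∈ Set.Ioo (0:ℝ) 1)
    (hγ : 0 ≤ γ) (hT : 0 < T)
    (y₀1 y₀2 : ℝ) (hy₀1 : y₀1 ∈ Set.Ioo 0 (F1 β 1)) (hy₀2 : y₀2 ∈ Set.Ioo 0 (F1 β 1))
    (w1 w2 : ℝ → ℝ)
    (hw1c : ContinuousOn w1 (Set.Icc 0 T)) (hw10 : w1 0 = 0)
    (hw2c : ContinuousOn w2 (Set.Icc 0 T)) (hw20 : w2 0 = 0)
    (y1 y2 : ℝ → ℝ)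
    (hy1c : ContinuousOn y1 (Set.Icc 0 T))
    (hy1m : ∀ t ∈ Set.Icc (0:ℝ) T, y1 t ∈ Set.Ioo 0 (F1 β 1))
    (hy1e : ∀ t ∈ Set.Icc (0:ℝ) T,
      y1 t = y₀1 + (∫ s in (0:ℝ)..t, G β θ μ (F1inv β (y1 s))) + γ * θ ^ β * w1 t)
    (hy2c : ContinuousOn y2 (Set.Icc 0 T))
    (hy2m : ∀ t ∈ Set.Icc (0:ℝ) T, y2 t ∈ Set.Ioo 0 (F1 β 1))
    (hy2e : ∀ t ∈ Set.Icc (0:ℝ) T,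
      y2 t = y₀2 + (∫ s in (0:ℝ)..t, G β θ μ (F1inv β (y2 s))) + γ * θ ^ β * w2 t) :
    ∀ t ∈ Set.Icc (0:ℝ) T,
      |y1 t - y2 t| ≤ |y₀1 - y₀2| +
        2 * γ * θ ^ β * sSup ((fun s => |w1 s - w2 s|) '' Set.Icc 0 T) :=
  stmt10_general α β θ μ γ T hα hβ hθ hμ hγ y₀1 y₀2 w1 w2 hw1c hw10 hw2c hw20 y1 y2 hy1c hy1m hy1e
    hy2c hy2m hy2e
end

section
/- Let y₀¹, y₀² ∈ (0, F₁(1)) with y₀¹ < y₀², and for i = 1,2 let y(y₀ⁱ) : ℝ₊ → (0, F₁(1)) be the continuous solution of y_t = y₀ⁱ + ∫₀^t (G ∘ F₁⁻¹)(y_s) ds + γθ^β w_t. Then y_t(y₀¹) < y_t(y₀²) for every t ∈ ℝ₊; that is, for each fixed t the map y₀ ↦ y_t(y₀) is strictly increasing on (0, F₁(1)). -/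
/-! The forcing term enters both equations additively, so it cancels in the difference
`Z = y₂ - y₁`, which is therefore differentiable with `|Z'| ≤ L |Z|` on every compact time
interval, `L` being a Lipschitz constant of `G ∘ F₁⁻¹` on the compact range of the two paths
(`G` is `C¹` on `(0, 1)`, and `F₁⁻¹` is `1`-Lipschitz because `F₁' ≥ 1` when `β ≥ 0`).
If `Z` vanished at some time `T`, Grönwall's inequality run backwards from `T` would force
`Z 0 = y₀² - y₀¹ = 0`. -/

open Set MeasureTheory intervalIntegral Filter Topology

lemma LipschitzOnWith.locallyLipschitzOn {α β : Type*} [PseudoEMetricSpace α]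
    [PseudoEMetricSpace β] {f : α → β} {K : NNReal} {s : Set α}
    (hf : LipschitzOnWith K f s) : LocallyLipschitzOn s f :=
  fun _ _ => ⟨K, s, self_mem_nhdsWithin, hf⟩

lemma LocallyLipschitzOn.comp {α β γ : Type*} [PseudoEMetricSpace α] [PseudoEMetricSpace β]
    [PseudoEMetricSpace γ] {f : β → γ} {g : α → β} {s : Set α} {t : Set β}
    (hf : LocallyLipschitzOn t f) (hg : LocallyLipschitzOn s g) (hst : MapsTo g s t) :
    LocallyLipschitzOn s (f ∘ g) := by
  intro x hx
  obtain ⟨Kg, u, hu, hgu⟩ := hg hx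
  obtain ⟨Kf, v, hv, hfv⟩ := hf (hst hx)
  have hgv : g ⁻¹' v ∈ 𝓝[s] x := (hg.continuousOn x hx).tendsto_nhdsWithin hst hv
  exact ⟨Kf * Kg, u ∩ g ⁻¹' v, inter_mem hu hgv,
    hfv.comp (hgu.mono inter_subset_left) fun y hy => hy.2⟩

theorem eq_zero_left_of_abs_deriv_le_mul_abs_self_of_eq_zero_right {E : Type*}
    [NormedAddCommGroup E] [NormedSpace ℝ E] {f f' : ℝ → E} {K a b : ℝ} (hab : a ≤ b)
    (hf : ∀ x ∈ Icc a b, HasDerivAt f (f' x) x) (hb : f b = 0)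
    (bound : ∀ x ∈ Icc a b, ‖f' x‖ ≤ K * ‖f x‖) :
    f a = 0 := by
  have hmem : ∀ x ∈ Icc 0 (b - a), b - x ∈ Icc a b := fun x hx =>
    ⟨by linarith [hx.2], by linarith [hx.1]⟩
  have hrev : ∀ x ∈ Icc 0 (b - a), HasDerivAt (fun x => f (b - x)) (-f' (b - x)) x :=
    fun x hx => by
      simpa [Function.comp_def] using (hf _ (hmem x hx)).scomp x ((hasDerivAt_id x).const_sub b)
  have := eq_zero_of_abs_deriv_le_mul_abs_self_of_eq_zero_right (K := K)
    (fun x hx => (hrev x hx).continuousAt.continuousWithinAt)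
    (fun x hx => (hrev x (Ico_subset_Icc_self hx)).hasDerivWithinAt) (by simpa using hb)
    (fun x hx => by simpa using bound _ (hmem x (Ico_subset_Icc_self hx)))
    (b - a) ⟨sub_nonneg.2 hab, le_rfl⟩
  simpa using this

theorem lt_of_eq_add_integral_add_of_lt {U : Set ℝ} {f g y₁ y₂ : ℝ → ℝ} {a₁ a₂ : ℝ}
    (hf : LocallyLipschitzOn U f)
    (hy₁c : ContinuousOn y₁ (Ici 0)) (hy₁U : MapsTo y₁ (Ici 0) U)
    (hy₁ : ∀ t ∈ Ici (0 : ℝ), y₁ t = a₁ + (∫ s in (0 : ℝ)..t, f (y₁ s)) + g t)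
    (hy₂c : ContinuousOn y₂ (Ici 0)) (hy₂U : MapsTo y₂ (Ici 0) U)
    (hy₂ : ∀ t ∈ Ici (0 : ℝ), y₂ t = a₂ + (∫ s in (0 : ℝ)..t, f (y₂ s)) + g t)
    (ha : a₁ < a₂) :
    ∀ t ∈ Ici (0 : ℝ), y₁ t < y₂ t := by
  have hmax : ∀ s : ℝ, max s 0 ∈ Ici (0 : ℝ) := fun s => le_max_right s 0
  have hext : ∀ {y : ℝ → ℝ}, ContinuousOn y (Ici 0) → MapsTo y (Ici 0) U →
      Continuous fun s => f (y (max s 0)) := fun hyc hyU =>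
    hf.continuousOn.comp_continuous (hyc.comp_continuous (by fun_prop) hmax) fun s => hyU (hmax s)
  set h : ℝ → ℝ := fun s => f (y₂ (max s 0)) - f (y₁ (max s 0))
  have hh : Continuous h := (hext hy₂c hy₂U).sub (hext hy₁c hy₁U)
  set Z : ℝ → ℝ := fun t => (a₂ - a₁) + ∫ s in (0 : ℝ)..t, h s
  have hZ' : ∀ t, HasDerivAt Z (h t) t := fun t =>
    ((hh.integral_hasStrictDerivAt 0 t).hasDerivAt).const_add _
  have hZ : ∀ t ∈ Ici (0 : ℝ), Z t = y₂ t - y₁ t := by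
    intro t ht
    have hmax_eq : ∀ {y : ℝ → ℝ},
        (∫ s in (0 : ℝ)..t, f (y (max s 0))) = ∫ s in (0 : ℝ)..t, f (y s) :=
      integral_congr fun s hs => by
        rw [uIcc_of_le ht] at hs
        simp only [max_eq_left hs.1]
    simp only [Z, h]
    rw [integral_sub ((hext hy₂c hy₂U).intervalIntegrable _ _)
      ((hext hy₁c hy₁U).intervalIntegrable _ _), hmax_eq, hmax_eq, hy₁ t ht, hy₂ t ht]
    ring
  intro t ht
  by_contra! hle
  obtain ⟨T, hT, hZT⟩ : ∃ T ∈ Icc 0 t, Z T = 0 := intermediate_value_Icc' ht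
    (fun s _ => (hZ' s).continuousAt.continuousWithinAt)
    ⟨by rw [hZ t ht]; linarith, by simp [Z]; linarith⟩
  have hTI : Icc 0 T ⊆ Ici 0 := Icc_subset_Ici_self
  obtain ⟨L, hL⟩ := (hf.mono (union_subset ((hy₁U.mono_left hTI).image_subset)
    ((hy₂U.mono_left hTI).image_subset))).exists_lipschitzOnWith_of_compact
    ((isCompact_Icc.image_of_continuousOn (hy₁c.mono hTI)).union
      (isCompact_Icc.image_of_continuousOn (hy₂c.mono hTI)))
  have hZ0 := eq_zero_left_of_abs_deriv_le_mul_abs_self_of_eq_zero_right (K := L) hT.1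
    (fun s _ => hZ' s) hZT fun s hs => by
      simp only [h, max_eq_left hs.1, Real.norm_eq_abs, hZ s hs.1]
      exact hL.dist_le_mul _ (Or.inr (mem_image_of_mem _ hs)) _ (Or.inl (mem_image_of_mem _ hs))
  simp [Z] at hZ0
  linarith

section F1

variable {β : ℝ}

lemma intervalIntegrable_F1_integrand (hβ : β < 1) :
    IntervalIntegrable (fun v : ℝ => (v * (1 - v)) ^ (-β)) volume 0 1 := by
  have hre : 0 < ((1 - β : ℝ) : ℂ).re := by simpa using hβ
  refine (Complex.betaIntegral_convergent hre hre).norm.congr_uIoo fun v hv => ?_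
  rw [uIoo_of_le zero_le_one] at hv
  have h1v : 0 < 1 - v := sub_pos.2 hv.2
  have hcast : (1 : ℂ) - v = ((1 - v : ℝ) : ℂ) := by push_cast; ring
  simp only
  rw [norm_mul, hcast, Complex.norm_cpow_eq_rpow_re_of_pos hv.1,
    Complex.norm_cpow_eq_rpow_re_of_pos h1v, Real.mul_rpow hv.1.le h1v.le]
  simp

lemma F1_sub_F1 (hβ : β < 1) {a b : ℝ} (ha : a ∈ Icc (0 : ℝ) 1) (hb : b ∈ Icc (0 : ℝ) 1) :
    F1 β b - F1 β a = ∫ v in a..b, (v * (1 - v)) ^ (-β) := by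
  have hsub : ∀ {x}, x ∈ Icc (0 : ℝ) 1 → uIcc 0 x ⊆ uIcc 0 1 := fun hx =>
    uIcc_subset_uIcc_left (by rwa [uIcc_of_le zero_le_one])
  exact integral_interval_sub_left ((intervalIntegrable_F1_integrand hβ).mono_set (hsub hb))
    ((intervalIntegrable_F1_integrand hβ).mono_set (hsub ha))

lemma sub_le_F1_sub_F1 (hβ₀ : 0 ≤ β) (hβ : β < 1) {a b : ℝ} (ha : a ∈ Icc (0 : ℝ) 1)
    (hb : b ∈ Icc (0 : ℝ) 1) (hab : a ≤ b) :
    b - a ≤ F1 β b - F1 β a := by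
  rw [F1_sub_F1 hβ ha hb]
  calc b - a = ∫ _ in a..b, (1 : ℝ) := by simp
    _ ≤ ∫ v in a..b, (v * (1 - v)) ^ (-β) := by
      refine integral_mono_on_of_le_Ioo hab intervalIntegrable_const
        ((intervalIntegrable_F1_integrand hβ).mono_set ?_) fun v hv => ?_
      · rw [uIcc_of_le zero_le_one]; exact uIcc_subset_Icc ha hb
      have hv₀ : 0 < v := ha.1.trans_lt hv.1
      have hv₁ : v < 1 := hv.2.trans_le hb.2
      exact Real.one_le_rpow_of_pos_of_le_one_of_nonpos (by nlinarith) (by nlinarith)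
        (neg_nonpos.2 hβ₀)

lemma abs_sub_le_abs_F1_sub_F1 (hβ₀ : 0 ≤ β) (hβ : β < 1) {a b : ℝ} (ha : a ∈ Icc (0 : ℝ) 1)
    (hb : b ∈ Icc (0 : ℝ) 1) :
    |b - a| ≤ |F1 β b - F1 β a| := by
  rcases le_total a b with hab | hba
  · rw [abs_of_nonneg (sub_nonneg.2 hab)]
    exact (sub_le_F1_sub_F1 hβ₀ hβ ha hb hab).trans (le_abs_self _)
  · rw [abs_sub_comm, abs_of_nonneg (sub_nonneg.2 hba), abs_sub_comm]
    exact (sub_le_F1_sub_F1 hβ₀ hβ hb ha hba).trans (le_abs_self _)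

lemma continuousOn_F1 (hβ : β < 1) : ContinuousOn (F1 β) (Icc 0 1) := by
  rw [← uIcc_of_le zero_le_one]
  exact continuousOn_primitive_interval' (intervalIntegrable_F1_integrand hβ) left_mem_uIcc

lemma Icc_subset_image_F1 (hβ : β < 1) : Icc 0 (F1 β 1) ⊆ F1 β '' Icc 0 1 := by
  simpa [F1] using intermediate_value_Icc zero_le_one (continuousOn_F1 hβ)

lemma mapsTo_F1inv (hβ : β < 1) : MapsTo (F1inv β) (Icc 0 (F1 β 1)) (Icc 0 1) :=
  fun _ hz => Function.invFunOn_mem (Icc_subset_image_F1 hβ hz)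

lemma F1_F1inv (hβ : β < 1) {z : ℝ} (hz : z ∈ Icc 0 (F1 β 1)) : F1 β (F1inv β z) = z :=
  Function.invFunOn_eq (Icc_subset_image_F1 hβ hz)

lemma lipschitzOnWith_F1inv (hβ₀ : 0 ≤ β) (hβ : β < 1) :
    LipschitzOnWith 1 (F1inv β) (Icc 0 (F1 β 1)) := by
  refine LipschitzOnWith.of_dist_le_mul fun x hx y hy => ?_
  simpa [Real.dist_eq, F1_F1inv hβ hx, F1_F1inv hβ hy] using
    abs_sub_le_abs_F1_sub_F1 hβ₀ hβ (mapsTo_F1inv hβ hy) (mapsTo_F1inv hβ hx)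

lemma mapsTo_F1inv_Ioo (hβ : β < 1) : MapsTo (F1inv β) (Ioo 0 (F1 β 1)) (Ioo 0 1) := by
  intro z hz
  have hzI : z ∈ Icc 0 (F1 β 1) := Ioo_subset_Icc_self hz
  obtain ⟨h₀, h₁⟩ := mapsTo_F1inv hβ hzI
  refine ⟨h₀.lt_of_ne fun h => hz.1.ne ?_, h₁.lt_of_ne fun h => hz.2.ne ?_⟩
  · rw [← F1_F1inv hβ hzI, ← h]; simp [F1]
  · rw [← F1_F1inv hβ hzI, h]

end F1

lemma contDiffOn_G (β θ μ : ℝ) : ContDiffOn ℝ 1 (G β θ μ) (Ioo 0 1) := by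
  intro x hx
  have hx' : x * (1 - x) ≠ 0 := by nlinarith [hx.1, hx.2]
  refine ContDiffAt.contDiffWithinAt ?_
  unfold G
  fun_prop (disch := exact hx')

theorem stmt12_general (α β θ μ γ : ℝ) (hα : α ∈ Set.Ioc (0:ℝ) 1)
    (hβ : β ∈ Set.Ioo (1 - α) 1)
    (w : ℝ → ℝ)
    (y₀1 y₀2 : ℝ)
    (hy₀ : y₀1 < y₀2)
    (y1 y2 : ℝ → ℝ)
    (hy1c : ContinuousOn y1 (Set.Ici 0))
    (hy1m : ∀ t ∈ Set.Ici (0:ℝ), y1 t ∈ Set.Ioo 0 (F1 β 1))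
    (hy1e : ∀ t ∈ Set.Ici (0:ℝ),
      y1 t = y₀1 + (∫ s in (0:ℝ)..t, G β θ μ (F1inv β (y1 s))) + γ * θ ^ β * w t)
    (hy2c : ContinuousOn y2 (Set.Ici 0))
    (hy2m : ∀ t ∈ Set.Ici (0:ℝ), y2 t ∈ Set.Ioo 0 (F1 β 1))
    (hy2e : ∀ t ∈ Set.Ici (0:ℝ),
      y2 t = y₀2 + (∫ s in (0:ℝ)..t, G β θ μ (F1inv β (y2 s))) + γ * θ ^ β * w t) :
    ∀ t ∈ Set.Ici (0:ℝ), y1 t < y2 t := by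
  have hβ₀ : 0 ≤ β := by linarith [hα.2, hβ.1]
  have hf : LocallyLipschitzOn (Ioo 0 (F1 β 1)) (G β θ μ ∘ F1inv β) :=
    ((contDiffOn_G β θ μ).locallyLipschitzOn (convex_Ioo 0 1)).comp
      ((lipschitzOnWith_F1inv hβ₀ hβ.2).locallyLipschitzOn.mono Ioo_subset_Icc_self)
      (mapsTo_F1inv_Ioo hβ.2)
  exact lt_of_eq_add_integral_add_of_lt (g := fun t => γ * θ ^ β * w t) hf hy1c hy1m hy1e
    hy2c hy2m hy2e hy₀

theorem stmt12 (α β θ μ γ : ℝ) (hα : α ∈ Set.Ioc (0:ℝ) 1)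
    (hβ : β ∈ Set.Ioo (1 - α) 1) (hθ : 0 < θ) (hμ : μ ∈ Set.Ioo (0:ℝ) 1)
    (w : ℝ → ℝ) (hw0 : w 0 = 0)
    (hw : ∀ T > (0:ℝ), ∃ C : ℝ, ∀ s ∈ Set.Icc (0:ℝ) T, ∀ t ∈ Set.Icc (0:ℝ) T,
      |w t - w s| ≤ C * |t - s| ^ α)
    (y₀1 y₀2 : ℝ) (hy₀1 : y₀1 ∈ Set.Ioo 0 (F1 β 1)) (hy₀2 : y₀2 ∈ Set.Ioo 0 (F1 β 1))
    (hy₀ : y₀1 < y₀2)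
    (y1 y2 : ℝ → ℝ)
    (hy1c : ContinuousOn y1 (Set.Ici 0))
    (hy1m : ∀ t ∈ Set.Ici (0:ℝ), y1 t ∈ Set.Ioo 0 (F1 β 1))
    (hy1e : ∀ t ∈ Set.Ici (0:ℝ),
      y1 t = y₀1 + (∫ s in (0:ℝ)..t, G β θ μ (F1inv β (y1 s))) + γ * θ ^ β * w t)
    (hy2c : ContinuousOn y2 (Set.Ici 0))
    (hy2m : ∀ t ∈ Set.Ici (0:ℝ), y2 t ∈ Set.Ioo 0 (F1 β 1))
    (hy2e : ∀ t ∈ Set.Ici (0:ℝ),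
      y2 t = y₀2 + (∫ s in (0:ℝ)..t, G β θ μ (F1inv β (y2 s))) + γ * θ ^ β * w t) :
    ∀ t ∈ Set.Ici (0:ℝ), y1 t < y2 t :=
  stmt12_general α β θ μ γ hα hβ w y₀1 y₀2 hy₀ y1 y2 hy1c hy1m hy1e hy2c hy2m hy2e
end
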